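/- arXiv:2102.07432 — 5 statements merged into one kernel-verified Lean document; each statement's English description precedes it below -/
import Mathlib

section
/- Let Λ(X) = ψ(X) X + λ ∇N(X) = (ψ(X) + λ(X X^T − I_p)) X with λ > 0, where ψ(X) is skew-symmetric. For X invertible, Λ(X) = 0 if and only if X X^T = I_p and ψ(X) = 0. -/
/-! Cancelling the invertible factor `X` leaves `ψ(X) + λ (X Xᵀ - I) = 0`, a skew-symmetric
plus a symmetric matrix; transposing shows both summands vanish, and `λ ≠ 0` gives `X Xᵀ = I`. -/

open Matrix

theorem Matrix.eq_zero_of_add_eq_zero_of_transpose_eq_neg_of_isSymm {n R : Type*}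
    [AddCommGroup R] [IsAddTorsionFree R] {A S : Matrix n n R}
    (hA : Aᵀ = -A) (hS : S.IsSymm) (h : A + S = 0) : A = 0 ∧ S = 0 := by
  have hSA : S = -A := eq_neg_of_add_eq_zero_right h
  have hAS : A = S := by
    calc A = -Aᵀ := by rw [hA, neg_neg]
      _ = Sᵀ := by rw [hSA, transpose_neg]
      _ = S := hS
  have hA0 : A = 0 := self_eq_neg (G := n → n → R).mp (hAS.trans hSA)
  exact ⟨hA0, hAS ▸ hA0⟩

/-- Critical points of the landing field: for `X` invertible and `λ > 0`,
`Λ(X) = (ψ(X) + λ (X Xᵀ − I)) X = 0` iff `X Xᵀ = I` and `ψ(X) = 0`. -/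
theorem stmt_7 (p : ℕ) (ψ : Matrix (Fin p) (Fin p) ℝ → Matrix (Fin p) (Fin p) ℝ)
    (hψ : ∀ X, (ψ X)ᵀ = -ψ X) (lam : ℝ) (hlam : 0 < lam)
    (X : Matrix (Fin p) (Fin p) ℝ) (hX : IsUnit X) :
    (ψ X + lam • (X * Xᵀ - 1)) * X = 0 ↔ X * Xᵀ = 1 ∧ ψ X = 0 := by
  constructor
  · intro h
    have hsymm : (lam • (X * Xᵀ - 1)).IsSymm :=
      ((isSymm_mul_transpose_self X).sub isSymm_one).smul lam
    obtain ⟨hψX, hsmul⟩ := eq_zero_of_add_eq_zero_of_transpose_eq_neg_of_isSymm (hψ X) hsymm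
      (hX.mul_left_eq_zero.mp h)
    exact ⟨sub_eq_zero.mp ((smul_eq_zero.mp hsmul).resolve_left hlam.ne'), hψX⟩
  · rintro ⟨hXXt, hψX⟩
    simp [hXXt, hψX]
end

section
/- For any p×p real matrix X, ‖(X X^T − I_p) X‖_F² ≥ N(X) − N(X)^{3/2}, where N(X) = ‖X X^T − I_p‖_F². -/
/-!
With `Δ = X Xᵀ - 1`, which is symmetric, `‖Δ X‖² = tr (Δ² X Xᵀ) = tr (Δ² (Δ + 1)) = ‖Δ‖² + tr Δ³`.
The cubic term is the Frobenius inner product of `Δ` and `Δ²`, so by Cauchy–Schwarz and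
submultiplicativity of the Frobenius norm, `tr Δ³ ≥ -‖Δ‖ ‖Δ²‖ ≥ -‖Δ‖³`.
-/

open Matrix

/-- Frobenius norm of a square real matrix. -/
noncomputable def frob {p : ℕ} (M : Matrix (Fin p) (Fin p) ℝ) : ℝ :=
  Real.sqrt (Matrix.trace (Mᵀ * M))

namespace Matrix

attribute [local instance] frobeniusNormedAddCommGroup

variable {m n : Type*} [Fintype m] [Fintype n]

lemma trace_transpose_mul_eq_sum (A B : Matrix m n ℝ) :
    trace (Aᵀ * B) = ∑ i, ∑ j, A i j * B i j := by
  simp only [trace, diag, mul_apply, transpose_apply]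
  exact Finset.sum_comm

lemma frobenius_norm_eq_sqrt_trace (A : Matrix m n ℝ) : ‖A‖ = √(trace (Aᵀ * A)) := by
  simp [frobenius_norm_def, trace_transpose_mul_eq_sum, ← sq, Real.sqrt_eq_rpow]

lemma frobenius_norm_sq_eq_trace (A : Matrix m n ℝ) : ‖A‖ ^ 2 = trace (Aᵀ * A) := by
  rw [frobenius_norm_eq_sqrt_trace, Real.sq_sqrt, trace_transpose_mul_eq_sum]
  exact Finset.sum_nonneg fun i _ => Finset.sum_nonneg fun j _ => mul_self_nonneg _

lemma trace_transpose_mul_le (A B : Matrix m n ℝ) : trace (Aᵀ * B) ≤ ‖A‖ * ‖B‖ := by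
  have h := Real.sum_mul_le_sqrt_mul_sqrt Finset.univ (fun q : m × n => A q.1 q.2)
    (fun q => B q.1 q.2)
  simpa [Fintype.sum_prod_type, frobenius_norm_eq_sqrt_trace, trace_transpose_mul_eq_sum, sq]
    using h

lemma neg_frobenius_norm_pow_three_le_trace {Δ : Matrix n n ℝ} (hΔ : Δ.IsSymm) :
    -‖Δ‖ ^ 3 ≤ trace (Δ * Δ * Δ) := by
  calc -‖Δ‖ ^ 3 ≤ -(‖-Δ‖ * ‖Δ * Δ‖) := by
        rw [norm_neg, neg_le_neg_iff, pow_succ', sq]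
        exact mul_le_mul_of_nonneg_left (frobenius_norm_mul Δ Δ) (norm_nonneg Δ)
    _ ≤ -trace ((-Δ)ᵀ * (Δ * Δ)) := neg_le_neg (trace_transpose_mul_le _ _)
    _ = trace (Δ * Δ * Δ) := by
        rw [transpose_neg, hΔ.eq, neg_mul, trace_neg, neg_neg, Matrix.mul_assoc]

lemma frobenius_norm_sq_mul_of_isSymm {Δ : Matrix n n ℝ} (hΔ : Δ.IsSymm) (X : Matrix n m ℝ) :
    ‖Δ * X‖ ^ 2 = trace (Δ * Δ * (X * Xᵀ)) := by
  rw [frobenius_norm_sq_eq_trace, transpose_mul, hΔ.eq, Matrix.mul_assoc, trace_mul_comm]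
  simp only [Matrix.mul_assoc]

lemma frobenius_norm_sq_sub_pow_three_le [DecidableEq n] (X : Matrix n m ℝ) :
    ‖X * Xᵀ - 1‖ ^ 2 - ‖X * Xᵀ - 1‖ ^ 3 ≤ ‖(X * Xᵀ - 1) * X‖ ^ 2 := by
  set Δ := X * Xᵀ - 1 with hΔ
  have hsymm : Δ.IsSymm := by
    simp [hΔ, IsSymm, transpose_sub, transpose_mul]
  have hXXt : X * Xᵀ = Δ + 1 := by rw [hΔ, sub_add_cancel]
  have hexpand : ‖Δ * X‖ ^ 2 = ‖Δ‖ ^ 2 + trace (Δ * Δ * Δ) := by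
    rw [frobenius_norm_sq_mul_of_isSymm hsymm, hXXt, Matrix.mul_add, Matrix.mul_one, trace_add,
      frobenius_norm_sq_eq_trace, hsymm.eq, add_comm]
  linarith [neg_frobenius_norm_pow_three_le_trace hsymm]

end Matrix

lemma Real.sq_rpow_three_div_two {a : ℝ} (ha : 0 ≤ a) : (a ^ 2) ^ ((3 : ℝ) / 2) = a ^ 3 := by
  rw [← Real.rpow_natCast, ← Real.rpow_mul ha]
  norm_num

lemma frob_nonneg {p : ℕ} (M : Matrix (Fin p) (Fin p) ℝ) : 0 ≤ frob M :=
  Real.sqrt_nonneg _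

section

attribute [local instance] Matrix.frobeniusNormedAddCommGroup

lemma frob_eq_norm {p : ℕ} (M : Matrix (Fin p) (Fin p) ℝ) : frob M = ‖M‖ :=
  (frobenius_norm_eq_sqrt_trace M).symm

end

/-- `‖(X Xᵀ − I) X‖_F² ≥ N(X) − N(X)^{3/2}` where `N(X) = ‖X Xᵀ − I‖_F²`. -/
theorem stmt_9 (p : ℕ) (X : Matrix (Fin p) (Fin p) ℝ) :
    frob ((X * Xᵀ - 1) * X) ^ 2 ≥
      frob (X * Xᵀ - 1) ^ 2 - (frob (X * Xᵀ - 1) ^ 2) ^ ((3:ℝ)/2) := by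
  rw [Real.sq_rpow_three_div_two (frob_nonneg _), frob_eq_norm, frob_eq_norm]
  exact frobenius_norm_sq_sub_pow_three_le X
end

section
/- Let n : [0,∞) → [0,∞) be differentiable with n(0) = N_0 ∈ (0,1) and satisfying n'(t) ≤ −λ (n(t) − n(t)^{3/2}) for all t ≥ 0, with λ > 0. Then n(t) ≤ e^{−λ t} · N_0 / (√N_0 − 1)² for all t ≥ 0. -/
/-!
Let `g x = x / (1 - √x) ^ 2`, the exponential of the primitive `log x - 2 log (1 - √x)` of
`1 / (x - x ^ (3/2))`. While `n < 1` the hypothesis gives `(g ∘ n)' ≤ -λ (g ∘ n)`, so Grönwall's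
inequality yields `g (n t) ≤ e^{-λt} g N₀`, and `n ≤ g n` finishes. That `n` never reaches `1` is
a barrier argument: whenever `n = N₀` the hypothesis forces `n' < 0`, so `n` stays below `N₀`.
-/

open Real Set Filter Topology

noncomputable def divOneSubSqrtSq (x : ℝ) : ℝ := x / (1 - √x) ^ 2

/-- For `x < 0` both sides are `x`: there `√x = 0`, and `x ^ (3/2) = 0` because Mathlib defines
`x ^ y = exp (y log x) cos (y π)` for negative `x`. -/
lemma sub_rpow_three_halves (x : ℝ) : x - x ^ ((3 : ℝ) / 2) = x * (1 - √x) := by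
  rcases lt_or_ge x 0 with hx | hx
  · have hcos : cos (3 / 2 * π) = 0 := by
      rw [show 3 / 2 * π = π / 2 + π by ring, cos_add_pi, cos_pi_div_two, neg_zero]
    rw [rpow_def_of_neg hx, hcos, sqrt_eq_zero_of_nonpos hx.le]
    ring
  · rw [show (3 : ℝ) / 2 = 1 + 1 / 2 by norm_num, rpow_add' hx (by norm_num), rpow_one,
      ← sqrt_eq_rpow]
    ring

lemma one_sub_sqrt_pos {x : ℝ} (hx : x < 1) : 0 < 1 - √x := by
  rw [sub_pos, sqrt_lt' one_pos]
  simpa using hx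

lemma self_le_divOneSubSqrtSq {x : ℝ} (hx : x < 1) : x ≤ divOneSubSqrtSq x := by
  rcases lt_or_ge x 0 with hneg | hnonneg
  · simp [divOneSubSqrtSq, sqrt_eq_zero_of_nonpos hneg.le]
  · have hle : (1 - √x) ^ 2 ≤ 1 := pow_le_one₀ (one_sub_sqrt_pos hx).le (by simp)
    exact le_div_self hnonneg (pow_pos (one_sub_sqrt_pos hx) 2) hle

lemma hasDerivAt_divOneSubSqrtSq {x : ℝ} (hx : x < 1) :
    HasDerivAt divOneSubSqrtSq ((1 - √x) ^ 3)⁻¹ x := by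
  rcases lt_trichotomy x 0 with hneg | rfl | hpos
  · have hid : divOneSubSqrtSq =ᶠ[𝓝 x] id := by
      filter_upwards [gt_mem_nhds hneg] with y hy
      simp [divOneSubSqrtSq, sqrt_eq_zero_of_nonpos hy.le]
    simpa [sqrt_eq_zero_of_nonpos hneg.le] using (hasDerivAt_id x).congr_of_eventuallyEq hid
  · rw [hasDerivAt_iff_tendsto_slope]
    have hcont : ContinuousAt (fun y : ℝ => ((1 - √y) ^ 2)⁻¹) 0 :=
      ((continuous_const.sub continuous_sqrt).pow 2).continuousAt.inv₀ (by simp)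
    have hlim := hcont.tendsto.mono_left (nhdsWithin_le_nhds (s := {0}ᶜ))
    simp only [sqrt_zero, sub_zero, one_pow, inv_one] at hlim ⊢
    refine hlim.congr' ?_
    filter_upwards [self_mem_nhdsWithin] with y (hy : y ≠ 0)
    rw [slope_def_field, divOneSubSqrtSq, divOneSubSqrtSq, sqrt_zero, sub_zero, zero_div,
      sub_zero, sub_zero, div_div_cancel_left' hy]
  · have hs := one_sub_sqrt_pos hx
    have hsq : HasDerivAt (fun y => (1 - √y) ^ 2) (2 * (1 - √x) ^ 1 * (0 - 1 / (2 * √x))) x :=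
      ((hasDerivAt_const x 1).sub (hasDerivAt_sqrt hpos.ne')).pow 2
    refine ((hasDerivAt_id' x).div hsq (by positivity)).congr_deriv ?_
    have hsx : 0 < √x := sqrt_pos.2 hpos
    field_simp
    linear_combination -mul_self_sqrt hpos.le

lemma divOneSubSqrtSq_eq_inv_mul_sub_rpow {x : ℝ} (hx : x < 1) :
    divOneSubSqrtSq x = ((1 - √x) ^ 3)⁻¹ * (x - x ^ ((3 : ℝ) / 2)) := by
  have hs := one_sub_sqrt_pos hx
  rw [sub_rpow_three_halves, divOneSubSqrtSq]
  field_simp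

lemma le_apply_of_deriv_neg_of_eq {f f' : ℝ → ℝ} {a : ℝ}
    (hf : ∀ x ≥ a, HasDerivAt f (f' x) x) (hneg : ∀ x ≥ a, f x = f a → f' x < 0) :
    ∀ x ≥ a, f x ≤ f a := by
  intro x hx
  exact image_le_of_deriv_right_lt_deriv_boundary' (B := fun _ => f a) (B' := 0)
    (fun y hy => (hf y hy.1).continuousAt.continuousWithinAt)
    (fun y hy => (hf y hy.1).hasDerivWithinAt) le_rfl continuousOn_const
    (fun _ _ => hasDerivWithinAt_const _ _ _) (fun y hy => hneg y hy.1) ⟨hx, le_rfl⟩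

lemma le_mul_exp_of_deriv_le_neg_mul {f f' : ℝ → ℝ} {a c : ℝ}
    (hf : ∀ x ≥ a, HasDerivAt f (f' x) x) (hle : ∀ x ≥ a, f' x ≤ -c * f x) :
    ∀ x ≥ a, f x ≤ f a * exp (-c * (x - a)) := by
  intro x hx
  simpa [gronwallBound_ε0] using
    le_gronwallBound_of_liminf_deriv_right_le (b := x) (K := -c) (ε := 0)
    (fun y hy => (hf y hy.1).continuousAt.continuousWithinAt)
    (fun y hy _ hr => (hf y hy.1).hasDerivWithinAt.liminf_right_slope_le hr)
    le_rfl (fun y hy => by simpa using hle y hy.1) x ⟨hx, le_rfl⟩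

theorem stmt_11_general (n n' : ℝ → ℝ) (lam N0 : ℝ) (hlam : 0 < lam)
    (hN0 : N0 ∈ Set.Ioo (0:ℝ) 1) (h0 : n 0 = N0)
    (hderiv : ∀ t ≥ (0:ℝ), HasDerivAt n (n' t) t)
    (hineq : ∀ t ≥ (0:ℝ), n' t ≤ -lam * (n t - n t ^ ((3:ℝ)/2))) :
    ∀ t ≥ (0:ℝ), n t ≤ Real.exp (-lam * t) * N0 / (Real.sqrt N0 - 1) ^ 2 := by
  obtain ⟨hN0pos, hN0lt⟩ := hN0
  have hle : ∀ t ≥ (0:ℝ), n t ≤ N0 := by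
    rw [← h0]
    refine le_apply_of_deriv_neg_of_eq hderiv fun t ht hnt => (hineq t ht).trans_lt ?_
    rw [hnt, h0, sub_rpow_three_halves, neg_mul, neg_lt_zero]
    exact mul_pos hlam (mul_pos hN0pos (one_sub_sqrt_pos hN0lt))
  have hlt : ∀ t ≥ (0:ℝ), n t < 1 := fun t ht => (hle t ht).trans_lt hN0lt
  have hcomp : ∀ t ≥ (0:ℝ), HasDerivAt (divOneSubSqrtSq ∘ n)
      (((1 - √(n t)) ^ 3)⁻¹ * n' t) t := fun t ht =>
    (hasDerivAt_divOneSubSqrtSq (hlt t ht)).comp t (hderiv t ht)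
  have hcomp_deriv_le : ∀ t ≥ (0:ℝ),
      ((1 - √(n t)) ^ 3)⁻¹ * n' t ≤ -lam * (divOneSubSqrtSq ∘ n) t := by
    intro t ht
    have hpos := one_sub_sqrt_pos (hlt t ht)
    rw [Function.comp_apply, divOneSubSqrtSq_eq_inv_mul_sub_rpow (hlt t ht), mul_left_comm]
    exact mul_le_mul_of_nonneg_left (hineq t ht) (by positivity)
  have hgronwall := le_mul_exp_of_deriv_le_neg_mul hcomp hcomp_deriv_le
  intro t ht
  calc n t ≤ divOneSubSqrtSq (n t) := self_le_divOneSubSqrtSq (hlt t ht)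
    _ ≤ divOneSubSqrtSq (n 0) * exp (-lam * (t - 0)) := hgronwall t ht
    _ = exp (-lam * t) * N0 / (√N0 - 1) ^ 2 := by
      rw [h0, sub_zero, divOneSubSqrtSq, ← neg_sub, neg_sq]
      ring

/-- Scalar differential inequality: if `n(0) = N₀ ∈ (0,1)`, `n ≥ 0` on `[0,∞)`
and `n' ≤ −λ (n − n^{3/2})`, then `n(t) ≤ e^{−λt} N₀ / (√N₀ − 1)²`. -/
theorem stmt_11 (n n' : ℝ → ℝ) (lam N0 : ℝ) (hlam : 0 < lam)
    (hN0 : N0 ∈ Set.Ioo (0:ℝ) 1) (h0 : n 0 = N0)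
    (hnonneg : ∀ t ≥ (0:ℝ), 0 ≤ n t)
    (hderiv : ∀ t ≥ (0:ℝ), HasDerivAt n (n' t) t)
    (hineq : ∀ t ≥ (0:ℝ), n' t ≤ -lam * (n t - n t ^ ((3:ℝ)/2))) :
    ∀ t ≥ (0:ℝ), n t ≤ Real.exp (-lam * t) * N0 / (Real.sqrt N0 - 1) ^ 2 :=
  stmt_11_general n n' lam N0 hlam hN0 h0 hderiv hineq
end

section
/- If a solution X(t) of the landing flow Ẋ = −(ψ(X) + λ(X X^T − I_p)) X starts at X_0 ∈ O_p, then X(t) ∈ O_p for all t ≥ 0, and the flow coincides with the Riemannian gradient flow Ẋ = −ψ(X) X. -/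
/-!
The defect `N = X Xᵀ - I` evolves by `Ṅ = N ψ - ψ N - 2λ N X Xᵀ`, because `ψ` is skew. Hence the
Lyapunov function `V = tr (N Nᵀ)` satisfies `V̇ = -4λ tr ((N X) (N X)ᵀ) ≤ 0`: the commutator term
drops out of the trace by cyclicity. As `V ≥ 0` and `V(0) = 0`, `V` vanishes for `t ≥ 0`, so
`X Xᵀ = I` there, and the penalty term `λ (X Xᵀ - I) X` of the landing field vanishes.
-/

open Matrix

section EntrywiseCalculus

variable {l m n : Type*} {t : ℝ}

theorem Matrix.hasDerivAt_mul_apply [Fintype m] {A : ℝ → Matrix l m ℝ} {B : ℝ → Matrix m n ℝ}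
    {A' : Matrix l m ℝ} {B' : Matrix m n ℝ}
    (hA : ∀ i j, HasDerivAt (fun s => A s i j) (A' i j) t)
    (hB : ∀ i j, HasDerivAt (fun s => B s i j) (B' i j) t) (i : l) (k : n) :
    HasDerivAt (fun s => (A s * B s) i k) ((A' * B t + A t * B') i k) t := by
  simp only [mul_apply, add_apply, ← Finset.sum_add_distrib]
  exact HasDerivAt.fun_sum fun j _ => (hA i j).mul (hB j k)

theorem Matrix.hasDerivAt_mul_transpose_self_apply [Fintype n] {A : ℝ → Matrix m n ℝ}
    {A' : Matrix m n ℝ} (hA : ∀ i j, HasDerivAt (fun s => A s i j) (A' i j) t) (i k : m) :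
    HasDerivAt (fun s => (A s * (A s)ᵀ) i k) ((A' * (A t)ᵀ + A t * A'ᵀ) i k) t :=
  hasDerivAt_mul_apply (B := fun s => (A s)ᵀ) hA (fun i j => hA j i) i k

theorem Matrix.hasDerivAt_trace [Fintype n] {A : ℝ → Matrix n n ℝ} {A' : Matrix n n ℝ}
    (hA : ∀ i j, HasDerivAt (fun s => A s i j) (A' i j) t) :
    HasDerivAt (fun s => trace (A s)) (trace A') t :=
  HasDerivAt.fun_sum fun i _ => hA i i

theorem Matrix.hasDerivAt_trace_mul_transpose_self [Fintype m] [Fintype n]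
    {A : ℝ → Matrix m n ℝ} {A' : Matrix m n ℝ}
    (hA : ∀ i j, HasDerivAt (fun s => A s i j) (A' i j) t) :
    HasDerivAt (fun s => trace (A s * (A s)ᵀ)) (2 * trace (A' * (A t)ᵀ)) t := by
  have h := hasDerivAt_trace (hasDerivAt_mul_transpose_self_apply hA)
  rwa [trace_add, ← trace_transpose (A t * A'ᵀ), transpose_mul, transpose_transpose,
    ← two_mul] at h

end EntrywiseCalculus

section TraceMulTranspose

variable {m n : Type*} [Fintype m] [Fintype n]

theorem Matrix.trace_mul_transpose_self_nonneg (A : Matrix m n ℝ) : 0 ≤ trace (A * Aᵀ) := by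
  simpa [conjTranspose_eq_transpose_of_trivial] using
    (posSemidef_self_mul_conjTranspose A).trace_nonneg

theorem Matrix.trace_mul_transpose_self_eq_zero_iff {A : Matrix m n ℝ} :
    trace (A * Aᵀ) = 0 ↔ A = 0 := by
  simpa [conjTranspose_eq_transpose_of_trivial] using
    trace_mul_conjTranspose_self_eq_zero_iff (A := A)

end TraceMulTranspose

section LandingAlgebra

variable {m n R : Type*} [Fintype m] [DecidableEq m] [Fintype n] [CommRing R]
  (X : Matrix m n R) {ψ : Matrix m m R} (hψ : ψᵀ = -ψ) (lam : R)

include hψ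

theorem landing_gram_deriv :
    -((ψ + lam • (X * Xᵀ - 1)) * X) * Xᵀ + X * (-((ψ + lam • (X * Xᵀ - 1)) * X))ᵀ =
      (X * Xᵀ - 1) * ψ - ψ * (X * Xᵀ - 1) - (2 * lam) • ((X * Xᵀ - 1) * (X * Xᵀ)) := by
  simp only [transpose_neg, transpose_mul, transpose_add, transpose_smul, transpose_sub,
    transpose_transpose, transpose_one, hψ, Matrix.neg_mul, Matrix.mul_neg, Matrix.mul_assoc]
  rw [← Matrix.mul_assoc X Xᵀ]
  simp only [mul_sub, sub_mul, mul_add, add_mul, mul_neg, smul_mul_assoc, mul_smul_comm,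
    mul_one, one_mul, smul_sub, two_mul, add_smul]
  abel

theorem trace_landing_gram_deriv_mul :
    trace ((-((ψ + lam • (X * Xᵀ - 1)) * X) * Xᵀ + X * (-((ψ + lam • (X * Xᵀ - 1)) * X))ᵀ) *
      (X * Xᵀ - 1)ᵀ) = -(2 * lam) * trace ((X * Xᵀ - 1) * X * ((X * Xᵀ - 1) * X)ᵀ) := by
  rw [landing_gram_deriv X hψ]
  set N := X * Xᵀ - 1
  have hN : Nᵀ = N := by simp [N, transpose_sub, transpose_mul]
  have hcomm : trace ((N * ψ - ψ * N) * N) = 0 := by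
    rw [sub_mul, trace_sub, Matrix.mul_assoc, trace_mul_comm, sub_self]
  rw [hN, sub_mul, trace_sub, hcomm, zero_sub, smul_mul_assoc, trace_smul, smul_eq_mul,
    neg_mul, transpose_mul, hN]
  simp only [Matrix.mul_assoc]

end LandingAlgebra

theorem hasDerivAt_landing_lyapunov {m n : Type*} [Fintype m] [DecidableEq m]
    [Fintype n] {Ψ : Matrix m m ℝ} (hΨ : Ψᵀ = -Ψ) {lam t : ℝ} {X : ℝ → Matrix m n ℝ}
    (hX : ∀ i j, HasDerivAt (fun s => X s i j)
      ((-((Ψ + lam • (X t * (X t)ᵀ - 1)) * X t) : Matrix m n ℝ) i j) t) :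
    HasDerivAt (fun s => trace ((X s * (X s)ᵀ - 1) * (X s * (X s)ᵀ - 1)ᵀ))
      (-(4 * lam) * trace ((X t * (X t)ᵀ - 1) * X t * ((X t * (X t)ᵀ - 1) * X t)ᵀ)) t := by
  have hN : ∀ i j, HasDerivAt (fun s => (X s * (X s)ᵀ - 1 : Matrix m m ℝ) i j) _ t := fun i j =>
    (hasDerivAt_mul_transpose_self_apply hX i j).sub_const ((1 : Matrix m m ℝ) i j)
  convert hasDerivAt_trace_mul_transpose_self hN using 1
  rw [trace_landing_gram_deriv_mul _ hΨ]
  ring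

/-- If the landing flow starts on the orthogonal manifold, it stays on it, and
coincides with the Riemannian gradient flow `Ẋ = −ψ(X) X`. -/
theorem stmt_12 (p : ℕ)
    (ψ : Matrix (Fin p) (Fin p) ℝ → Matrix (Fin p) (Fin p) ℝ)
    (hψ : ∀ X, (ψ X)ᵀ = -ψ X) (lam : ℝ) (hlam : 0 < lam)
    (X : ℝ → Matrix (Fin p) (Fin p) ℝ)
    (hflow : ∀ t i j, HasDerivAt (fun s => X s i j)
      ((-((ψ (X t) + lam • (X t * (X t)ᵀ - 1)) * X t)) i j) t)
    (h0 : X 0 * (X 0)ᵀ = 1) :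
    ∀ t ≥ (0:ℝ), X t * (X t)ᵀ = 1 ∧
      (∀ i j, HasDerivAt (fun s => X s i j) ((-(ψ (X t) * X t)) i j) t) := by
  have hanti := antitone_of_hasDerivAt_nonpos
    (fun t => hasDerivAt_landing_lyapunov (hψ (X t)) (hflow t)) fun t =>
      mul_nonpos_of_nonpos_of_nonneg (by linarith) (trace_mul_transpose_self_nonneg _)
  intro t ht
  have horth : X t * (X t)ᵀ = 1 := by
    refine sub_eq_zero.1 (trace_mul_transpose_self_eq_zero_iff.1
      (le_antisymm ?_ (trace_mul_transpose_self_nonneg _)))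
    simpa [h0] using hanti ht
  refine ⟨horth, fun i j => ?_⟩
  simpa [horth] using hflow t i j
end

section
/- Along the landing flow Ẋ = −Λ(X) with Λ(X) = (ψ(X) + λ(X X^T − I_p))X, the function n(t) = N(X(t)) satisfies n'(t) = −λ ‖(X X^T − I_p) X‖_F² ≤ 0; in particular N(X(t)) is non-increasing. -/
/-!
With `E = X Xᵀ - 1`, the gradient of `N(X) = ¼‖E‖²_F` is `E X`, so along any curve
`N' = ⟨E X, Ẋ⟩`. For the landing field `Ẋ = -(ψ + λE) X` the term `⟨E X, ψ X⟩` equals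
`tr(ψ · X Xᵀ E)`, which vanishes because `ψ` is skew and `X Xᵀ E` is symmetric (`X Xᵀ` commutes
with `E`). What remains is `-λ ‖E X‖²_F ≤ 0`, and a function with nonpositive derivative is
antitone.
-/

open Matrix

theorem frob_sq {p : ℕ} (M : Matrix (Fin p) (Fin p) ℝ) : frob M ^ 2 = trace (Mᵀ * M) := by
  refine Real.sq_sqrt ?_
  simpa only [conjTranspose_eq_transpose_of_trivial] using
    (posSemidef_conjTranspose_mul_self M).trace_nonneg

namespace Matrix

variable {m n R : Type*} [Fintype m] [Fintype n] [CommRing R]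

theorem trace_mul_eq_zero_of_transpose_eq_neg [IsAddTorsionFree R] {A S : Matrix m m R}
    (hA : Aᵀ = -A) (hS : S.IsSymm) : trace (A * S) = 0 := by
  refine self_eq_neg.mp ?_
  calc trace (A * S) = trace ((A * S)ᵀ) := (trace_transpose _).symm
    _ = trace (S * Aᵀ) := by rw [transpose_mul, hS.eq]
    _ = -trace (A * S) := by rw [hA, mul_neg, trace_neg, trace_mul_comm]

variable [DecidableEq m]

theorem trace_gradient_mul_landing_eq [IsAddTorsionFree R] (X : Matrix m n R) {ψ : Matrix m m R}
    (hψ : ψᵀ = -ψ) (c : R) :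
    trace (((X * Xᵀ - 1) * X)ᵀ * -((ψ + c • (X * Xᵀ - 1)) * X)) =
      -c * trace (((X * Xᵀ - 1) * X)ᵀ * ((X * Xᵀ - 1) * X)) := by
  set E := X * Xᵀ - 1
  have hS : (X * Xᵀ)ᵀ = X * Xᵀ := by rw [transpose_mul, transpose_transpose]
  have hE : Eᵀ = E := by rw [transpose_sub, hS, transpose_one]
  have hsymm : (X * Xᵀ * E).IsSymm := by
    rw [IsSymm, transpose_mul, hE, hS]
    exact ((Commute.refl _).sub_right (Commute.one_right _)).eq.symm
  have horth : trace ((E * X)ᵀ * (ψ * X)) = 0 := by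
    rw [transpose_mul, hE, trace_mul_comm,
      show ψ * X * (Xᵀ * E) = ψ * (X * Xᵀ * E) by simp only [Matrix.mul_assoc]]
    exact trace_mul_eq_zero_of_transpose_eq_neg hψ hsymm
  rw [Matrix.add_mul, Matrix.smul_mul, Matrix.mul_neg, Matrix.mul_add, Matrix.mul_smul, trace_neg,
    trace_add, trace_smul, horth, zero_add, smul_eq_mul, neg_mul]

end Matrix

section EntrywiseDeriv

variable {𝕜 : Type*} [NontriviallyNormedField 𝕜] {l m n : Type*}

/-- Mathlib puts no global norm on matrices, so derivatives of matrix-valued curves are taken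
entrywise. -/
def HasEntrywiseDerivAt (X : 𝕜 → Matrix m n 𝕜) (X' : Matrix m n 𝕜) (t : 𝕜) : Prop :=
  ∀ i j, HasDerivAt (fun s => X s i j) (X' i j) t

variable {X : 𝕜 → Matrix l m 𝕜} {X' : Matrix l m 𝕜} {t : 𝕜}

theorem HasEntrywiseDerivAt.mul [Fintype m] {Y : 𝕜 → Matrix m n 𝕜} {Y' : Matrix m n 𝕜}
    (hX : HasEntrywiseDerivAt X X' t) (hY : HasEntrywiseDerivAt Y Y' t) :
    HasEntrywiseDerivAt (fun s => X s * Y s) (X' * Y t + X t * Y') t := by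
  intro i j
  simpa only [mul_apply, Matrix.add_apply, Finset.sum_add_distrib] using
    HasDerivAt.fun_sum fun k _ => (hX i k).fun_mul (hY k j)

theorem HasEntrywiseDerivAt.transpose (hX : HasEntrywiseDerivAt X X' t) :
    HasEntrywiseDerivAt (fun s => (X s)ᵀ) X'ᵀ t :=
  fun i j => hX j i

theorem HasEntrywiseDerivAt.sub_const (hX : HasEntrywiseDerivAt X X' t) (C : Matrix l m 𝕜) :
    HasEntrywiseDerivAt (fun s => X s - C) X' t :=
  fun i j => (hX i j).sub_const (C i j)

theorem HasEntrywiseDerivAt.hasDerivAt_trace [Fintype m] {X : 𝕜 → Matrix m m 𝕜}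
    {X' : Matrix m m 𝕜} (hX : HasEntrywiseDerivAt X X' t) :
    HasDerivAt (fun s => trace (X s)) (trace X') t :=
  HasDerivAt.fun_sum fun i _ => hX i i

theorem HasEntrywiseDerivAt.hasDerivAt_trace_gram_sub_one_sq [Fintype l] [Fintype m]
    [DecidableEq l] (hX : HasEntrywiseDerivAt X X' t) :
    HasDerivAt (fun s => trace ((X s * (X s)ᵀ - 1)ᵀ * (X s * (X s)ᵀ - 1)))
      (4 * trace (((X t * (X t)ᵀ - 1) * X t)ᵀ * X')) t := by
  have hE := (hX.mul hX.transpose).sub_const 1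
  convert (hE.transpose.mul hE).hasDerivAt_trace using 1
  set E := X t * (X t)ᵀ - 1
  have hE : Eᵀ = E := by rw [transpose_sub, transpose_mul, transpose_transpose, transpose_one]
  have h₁ : trace (E * (X' * (X t)ᵀ)) = trace ((E * X t)ᵀ * X') := by
    rw [← Matrix.mul_assoc, trace_mul_comm, transpose_mul, hE, Matrix.mul_assoc]
  have h₂ : trace (E * (X t * X'ᵀ)) = trace ((E * X t)ᵀ * X') := by
    rw [← trace_transpose, transpose_mul, transpose_mul, hE, transpose_transpose, trace_mul_comm,
      h₁]
  have h₃ : trace ((X' * (X t)ᵀ + X t * X'ᵀ)ᵀ * E) = trace (E * (X' * (X t)ᵀ + X t * X'ᵀ)) := by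
    rw [← trace_transpose, transpose_mul, transpose_transpose, hE]
  rw [trace_add, h₃, hE, Matrix.mul_add, trace_add, h₁, h₂]
  ring

end EntrywiseDeriv

/-- Along the landing flow, `n(t) = N(X(t))` satisfies
`n'(t) = −λ ‖(X Xᵀ − I) X‖_F² ≤ 0`; in particular `N(X(t))` is non-increasing. -/
theorem stmt_13 (p : ℕ)
    (ψ : Matrix (Fin p) (Fin p) ℝ → Matrix (Fin p) (Fin p) ℝ)
    (hψ : ∀ X, (ψ X)ᵀ = -ψ X) (lam : ℝ) (hlam : 0 < lam)
    (X : ℝ → Matrix (Fin p) (Fin p) ℝ)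
    (hflow : ∀ t i j, HasDerivAt (fun s => X s i j)
      ((-((ψ (X t) + lam • (X t * (X t)ᵀ - 1)) * X t)) i j) t) :
    (∀ t, HasDerivAt (fun s => (1/4 : ℝ) * frob (X s * (X s)ᵀ - 1) ^ 2)
      (-lam * frob ((X t * (X t)ᵀ - 1) * X t) ^ 2) t) ∧
    (∀ t, -lam * frob ((X t * (X t)ᵀ - 1) * X t) ^ 2 ≤ 0) ∧
    Antitone (fun t => (1/4 : ℝ) * frob (X t * (X t)ᵀ - 1) ^ 2) := by
  have hderiv : ∀ t, HasDerivAt (fun s => (1/4 : ℝ) * frob (X s * (X s)ᵀ - 1) ^ 2)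
      (-lam * frob ((X t * (X t)ᵀ - 1) * X t) ^ 2) t := by
    intro t
    have h := (HasEntrywiseDerivAt.hasDerivAt_trace_gram_sub_one_sq (hflow t)).const_mul
      (1 / 4 : ℝ)
    rw [trace_gradient_mul_landing_eq _ (hψ (X t)), ← mul_assoc, one_div_mul_cancel four_ne_zero,
      one_mul] at h
    simpa only [frob_sq] using h
  have hnonpos : ∀ t, -lam * frob ((X t * (X t)ᵀ - 1) * X t) ^ 2 ≤ 0 := fun t =>
    mul_nonpos_of_nonpos_of_nonneg (neg_nonpos.mpr hlam.le) (sq_nonneg _)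
  exact ⟨hderiv, hnonpos, antitone_of_deriv_nonpos (fun t => (hderiv t).differentiableAt)
    fun t => (hderiv t).deriv ▸ hnonpos t⟩
end
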